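/- arXiv:1910.06996 — 4 statements merged into one kernel-verified Lean document; each statement's English description precedes it below -/
import Mathlib

section
/- Let d ≥ 1 and M ≥ 1, let A¹, …, A^M be finite subsets of ℝ^d (the action sets), and let θ ∈ ℝ^d. Assume that for each m ∈ {1,…,M} there is a unique maximizer x*_m of x ↦ ⟨x, θ⟩ over A^m, and define the gaps Δ^m_x = ⟨x*_m − x, θ⟩ for x ∈ A^m (so Δ^m_x > 0 for every x ≠ x*_m). If the set of optimal arms {x*_1, …, x*_M} spans ℝ^d, then there exists an assignment of nonnegative reals α_{x,m} (for m ∈ {1,…,M} and x ∈ A^m) such that: (i) the matrix G_α = Σ_{m=1}^M Σ_{x ∈ A^m} α_{x,m} · x xᵀ is positive definite; (ii) for every context m and every suboptimal arm x ∈ A^m (i.e. x ≠ x*_m), xᵀ G_α⁻¹ x ≤ (Δ^m_x)²/2; and (iii) Σ_{m=1}^M Σ_{x ∈ A^m} α_{x,m} · Δ^m_x = 0. -/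
/-!
Put weight `c` on each optimal arm `x*_m` and nothing elsewhere. The regret is then zero and the
design matrix is `c • G` with `G = ∑ₘ x*_m x*_mᵀ`, which is positive definite because the optimal
arms span. Since `xᵀ (c • G)⁻¹ x = xᵀ G⁻¹ x / c` and there are finitely many suboptimal arms, each
with a positive gap, every constraint holds once `c` is large enough.
-/

open Matrix

namespace Matrix

variable {ι n : Type*} [Fintype n]

theorem eq_zero_of_forall_dotProduct_eq_zero {v : ι → n → ℝ}
    (hv : Submodule.span ℝ (Set.range v) = ⊤) {w : n → ℝ} (h : ∀ i, v i ⬝ᵥ w = 0) : w = 0 := by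
  have : (dotProductBilin ℝ ℝ).flip w = 0 := LinearMap.ext_on_range hv h
  exact dotProduct_self_eq_zero.mp (LinearMap.congr_fun this w)

theorem posDef_sum_vecMulVec_self [Fintype ι] {v : ι → n → ℝ} (hv : Submodule.span ℝ (Set.range v) = ⊤) :
    (∑ i, vecMulVec (v i) (v i)).PosDef := by
  have hinj : Function.Injective (of v).mulVecLin :=
    LinearMap.ker_eq_bot.mp <| ker_mulVecLin_eq_bot_iff.mpr fun w hw =>
      eq_zero_of_forall_dotProduct_eq_zero hv fun i => congrFun hw i
  convert PosDef.conjTranspose_mul_self (of v) hinj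
  ext j k
  simp [mul_apply, sum_apply, vecMulVec_apply]

theorem dotProduct_inv_smul_mulVec [DecidableEq n] {G : Matrix n n ℝ} (hG : G.PosDef) {c : ℝ}
    (hc : c ≠ 0) (x : n → ℝ) : x ⬝ᵥ (c • G)⁻¹ *ᵥ x = c⁻¹ * (x ⬝ᵥ G⁻¹ *ᵥ x) := by
  have hdet : IsUnit G.det := (isUnit_iff_isUnit_det G).mp hG.isUnit
  have := inv_smul' G (Units.mk0 c hc) hdet
  rw [Units.smul_def, Units.val_mk0] at this
  rw [this, Units.smul_def, smul_mulVec, dotProduct_smul, Units.val_inv_eq_inv_val,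
    Units.val_mk0, smul_eq_mul]

end Matrix

theorem Finset.sum_sum_ite_eq_smul {ι α R E : Type*} [Fintype ι] [DecidableEq α] [Semiring R]
    [AddCommMonoid E] [Module R E] (A : ι → Finset α) (a : ι → α) (ha : ∀ i, a i ∈ A i)
    (c : R) (f : α → E) :
    ∑ i, ∑ x ∈ A i, (if x = a i then c else 0) • f x = c • ∑ i, f (a i) := by
  simp [ite_smul, Finset.sum_ite_eq', ha, Finset.smul_sum]

theorem exists_pos_forall_mem_le {ι α : Type*} [Finite ι] (A : ι → Finset α) (f : ι → α → ℝ) :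
    ∃ c > 0, ∀ i, ∀ x ∈ A i, f i x ≤ c := by
  obtain ⟨C, hC⟩ := Finite.exists_le fun p : (i : ι) × A i => f p.1 p.2
  exact ⟨max C 1, by positivity, fun i x hx => (hC ⟨i, x, hx⟩).trans (le_max_left _ _)⟩

theorem stmt4_general {d M : ℕ}
    (A : Fin M → Finset (Fin d → ℝ)) (θ : Fin d → ℝ)
    (xstar : Fin M → (Fin d → ℝ))
    (hmem : ∀ m, xstar m ∈ A m)
    (hunique : ∀ m, ∀ x ∈ A m, x ≠ xstar m → x ⬝ᵥ θ < xstar m ⬝ᵥ θ)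
    (hspan : Submodule.span ℝ (Set.range xstar) = ⊤) :
    ∃ α : Fin M → (Fin d → ℝ) → ℝ,
      (∀ m x, 0 ≤ α m x) ∧
      (∑ m, ∑ x ∈ A m, α m x • Matrix.vecMulVec x x).PosDef ∧
      (∀ m, ∀ x ∈ A m, x ≠ xstar m →
        x ⬝ᵥ ((∑ m', ∑ y ∈ A m', α m' y • Matrix.vecMulVec y y)⁻¹).mulVec x ≤
          ((xstar m - x) ⬝ᵥ θ) ^ 2 / 2) ∧
      (∑ m, ∑ x ∈ A m, α m x * ((xstar m - x) ⬝ᵥ θ)) = 0 := by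
  classical
  set G := ∑ m, vecMulVec (xstar m) (xstar m)
  have hG : G.PosDef := posDef_sum_vecMulVec_self hspan
  obtain ⟨c, hc, hbound⟩ := exists_pos_forall_mem_le A fun m x =>
    2 * (x ⬝ᵥ G⁻¹ *ᵥ x) / ((xstar m - x) ⬝ᵥ θ) ^ 2
  have hGα := Finset.sum_sum_ite_eq_smul A xstar hmem c fun x => vecMulVec x x
  refine ⟨fun m x => if x = xstar m then c else 0, fun m x => by dsimp only; split_ifs <;> positivity,
    hGα ▸ hG.smul hc, fun m x hx hne => ?_, by simp⟩
  have hgap : 0 < (xstar m - x) ⬝ᵥ θ := by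
    rw [sub_dotProduct]
    linarith [hunique m x hx hne]
  have hx := hbound m x hx
  rw [div_le_iff₀ (by positivity)] at hx
  rw [hGα, dotProduct_inv_smul_mulVec hG hc.ne', inv_mul_le_iff₀ hc]
  linarith

theorem stmt4 {d M : ℕ} (hd : 1 ≤ d) (hM : 1 ≤ M)
    (A : Fin M → Finset (Fin d → ℝ)) (θ : Fin d → ℝ)
    (xstar : Fin M → (Fin d → ℝ))
    (hmem : ∀ m, xstar m ∈ A m)
    (hunique : ∀ m, ∀ x ∈ A m, x ≠ xstar m → x ⬝ᵥ θ < xstar m ⬝ᵥ θ)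
    (hspan : Submodule.span ℝ (Set.range xstar) = ⊤) :
    ∃ α : Fin M → (Fin d → ℝ) → ℝ,
      (∀ m x, 0 ≤ α m x) ∧
      (∑ m, ∑ x ∈ A m, α m x • Matrix.vecMulVec x x).PosDef ∧
      (∀ m, ∀ x ∈ A m, x ≠ xstar m →
        x ⬝ᵥ ((∑ m', ∑ y ∈ A m', α m' y • Matrix.vecMulVec y y)⁻¹).mulVec x ≤
          ((xstar m - x) ⬝ᵥ θ) ^ 2 / 2) ∧
      (∑ m, ∑ x ∈ A m, α m x * ((xstar m - x) ⬝ᵥ θ)) = 0 :=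
  stmt4_general A θ xstar hmem hunique hspan
end

section
/- Let (X_t)_{t=1}^∞ be a sequence of vectors in ℝ^d with ‖X_t‖₂ ≤ 1 for all t, and let G_t = Σ_{s=1}^t X_s X_sᵀ. Suppose that λ_min(G_d) ≥ 1 (in particular G_t is invertible for all t ≥ d). Then for every n > d, Σ_{t=d+1}^n ‖X_t‖_{G_t⁻¹} ≤ sqrt(2 n d log((d+n)/d)). -/
/-! With `w t = X t ⬝ᵥ (G t)⁻¹ *ᵥ X t`, the matrix determinant lemma applied to the
downdate `G (t - 1) = G t - X t X tᵀ` gives `det G (t - 1) = det G t * (1 - w t)`, hence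
`w t ≤ log det G t - log det G (t - 1)` since `log (1 - w) ≤ -w`. Summing, the `w t` telescope
to `log det G n - log det G d`. The bound on `lambdaMin (G d)` makes `G d` positive definite
with all eigenvalues, hence `det G d`, at least `1`; AM-GM on the eigenvalues of `G n` gives
`det G n ≤ (tr G n / d) ^ d ≤ (n / d) ^ d`. Cauchy-Schwarz converts the bound on `∑ w t` into
one on `∑ √(w t)`. -/

open Matrix

/-- The smallest eigenvalue of a symmetric matrix, characterized as the infimum of the
Rayleigh quotient over the Euclidean unit sphere. -/
noncomputable def lambdaMin {d : ℕ} (A : Matrix (Fin d) (Fin d) ℝ) : ℝ :=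
  sInf {r : ℝ | ∃ x : Fin d → ℝ, ∑ i, (x i) ^ 2 = 1 ∧ r = x ⬝ᵥ A.mulVec x}

open Finset Real

theorem Real.prod_le_sum_div_card_pow {ι : Type*} (s : Finset ι) (f : ι → ℝ)
    (hf : ∀ i ∈ s, 0 ≤ f i) : ∏ i ∈ s, f i ≤ ((∑ i ∈ s, f i) / #s) ^ #s := by
  rcases s.eq_empty_or_nonempty with rfl | hs
  · simp
  have hcard : (#s : ℝ) ≠ 0 := by simp [hs.ne_empty]
  have hamgm := geom_mean_le_arith_mean_weighted s (fun _ ↦ (#s : ℝ)⁻¹) f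
    (fun _ _ ↦ by positivity) (by simp [hcard]) hf
  rw [← mul_sum, inv_mul_eq_div] at hamgm
  calc ∏ i ∈ s, f i = (∏ i ∈ s, f i ^ (#s : ℝ)⁻¹) ^ #s := by
        rw [← prod_pow]
        exact prod_congr rfl fun i hi ↦
          (rpow_inv_natCast_pow (hf i hi) (by simpa using hcard)).symm
    _ ≤ _ := pow_le_pow_left₀ (prod_nonneg fun i hi ↦ rpow_nonneg (hf i hi) _) hamgm _

theorem Real.sum_sqrt_le_sqrt_card_mul_sum {ι : Type*} (s : Finset ι) (f : ι → ℝ)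
    (hf : ∀ i ∈ s, 0 ≤ f i) : ∑ i ∈ s, √(f i) ≤ √(#s * ∑ i ∈ s, f i) := by
  rw [le_sqrt (sum_nonneg fun i _ ↦ sqrt_nonneg _)
    (mul_nonneg (Nat.cast_nonneg _) (sum_nonneg hf))]
  calc _ ≤ #s * ∑ i ∈ s, √(f i) ^ 2 := sq_sum_le_card_mul_sum_sq
    _ = _ := by rw [sum_congr rfl fun i hi ↦ sq_sqrt (hf i hi)]

namespace Matrix

variable {m : Type*} [Fintype m]

theorem det_sub_vecMulVec {R : Type*} [CommRing R] [DecidableEq m] {A : Matrix m m R}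
    (hA : IsUnit A.det) (u v : m → R) :
    (A - vecMulVec u v).det = A.det * (1 - v ⬝ᵥ A⁻¹ *ᵥ u) := by
  rw [sub_eq_add_neg, ← neg_vecMulVec, vecMulVec_eq Unit,
    det_add_replicateCol_mul_replicateRow hA, Matrix.mul_assoc, ← replicateCol_mulVec,
    det_unique (1 + _ : Matrix Unit Unit R), Matrix.add_apply, one_apply_eq,
    replicateRow_mul_replicateCol_apply, mulVec_neg, dotProduct_neg, sub_eq_add_neg]

theorem PosDef.dotProduct_inv_mulVec_le_log_det_sub [DecidableEq m] {A : Matrix m m ℝ}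
    (hA : A.PosDef) {x : m → ℝ} (hB : 0 < (A - vecMulVec x x).det) :
    x ⬝ᵥ A⁻¹ *ᵥ x ≤ log A.det - log (A - vecMulVec x x).det := by
  have hdetA := hA.det_pos
  have hratio : (A - vecMulVec x x).det / A.det = 1 - x ⬝ᵥ A⁻¹ *ᵥ x := by
    rw [det_sub_vecMulVec hdetA.ne'.isUnit, mul_div_cancel_left₀ _ hdetA.ne']
  have := log_le_sub_one_of_pos (div_pos hB hdetA)
  rw [log_div hB.ne' hdetA.ne', hratio] at this
  linarith

theorem PosDef.dotProduct_inv_mulVec_nonneg [DecidableEq m] {A : Matrix m m ℝ}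
    (hA : A.PosDef) (x : m → ℝ) : 0 ≤ x ⬝ᵥ A⁻¹ *ᵥ x := by
  simpa using hA.inv.posSemidef.dotProduct_mulVec_nonneg x

theorem posSemidef_vecMulVec_self (x : m → ℝ) : (vecMulVec x x).PosSemidef := by
  simpa using posSemidef_vecMulVec_self_star x

theorem PosSemidef.det_le_trace_div_card_pow [DecidableEq m] {A : Matrix m m ℝ}
    (hA : A.PosSemidef) : A.det ≤ (A.trace / Fintype.card m) ^ Fintype.card m := by
  rw [hA.isHermitian.det_eq_prod_eigenvalues, hA.isHermitian.trace_eq_sum_eigenvalues]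
  simpa using prod_le_sum_div_card_pow univ _ fun i _ ↦ hA.eigenvalues_nonneg i

theorem IsHermitian.le_eigenvalues [DecidableEq m] {A : Matrix m m ℝ} (hA : A.IsHermitian)
    {c : ℝ} (h : ∀ x, c * ∑ i, x i ^ 2 ≤ x ⬝ᵥ A *ᵥ x) (i : m) :
    c ≤ hA.eigenvalues i := by
  have hv : ∑ j, hA.eigenvectorBasis i j ^ 2 = 1 := by
    rw [← EuclideanSpace.real_norm_sq_eq, hA.eigenvectorBasis.orthonormal.1 i, one_pow]
  simpa [hA.eigenvalues_eq, hv] using h (hA.eigenvectorBasis i)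

theorem IsHermitian.one_le_det [DecidableEq m] {A : Matrix m m ℝ} (hA : A.IsHermitian)
    (h : ∀ x, ∑ i, x i ^ 2 ≤ x ⬝ᵥ A *ᵥ x) : 1 ≤ A.det := by
  rw [hA.det_eq_prod_eigenvalues]
  simpa using prod_le_prod (s := univ) (fun _ _ ↦ zero_le_one)
    fun i _ ↦ hA.le_eigenvalues (c := 1) (by simpa using h) i

theorem posDef_of_sum_sq_le_dotProduct_mulVec {A : Matrix m m ℝ} (hA : A.IsHermitian)
    (h : ∀ x, ∑ i, x i ^ 2 ≤ x ⬝ᵥ A *ᵥ x) : A.PosDef :=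
  .of_dotProduct_mulVec_pos hA fun x hx ↦ by
    obtain ⟨i, hi⟩ := Function.ne_iff.1 hx
    have hx2 : 0 < ∑ j, x j ^ 2 := sum_pos' (fun j _ ↦ sq_nonneg (x j))
      ⟨i, mem_univ i, pow_two_pos_of_ne_zero hi⟩
    simpa using hx2.trans_le (h x)

theorem smul_dotProduct_mulVec_smul (A : Matrix m m ℝ) (r : ℝ) (x : m → ℝ) :
    (r • x) ⬝ᵥ A *ᵥ (r • x) = r ^ 2 * (x ⬝ᵥ A *ᵥ x) := by
  rw [mulVec_smul, dotProduct_smul, smul_dotProduct, smul_eq_mul, smul_eq_mul]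
  ring

theorem PosSemidef.mul_sum_sq_le_of_le_lambdaMin {d : ℕ} {A : Matrix (Fin d) (Fin d) ℝ}
    (hA : A.PosSemidef) {c : ℝ} (hc : c ≤ lambdaMin A) (x : Fin d → ℝ) :
    c * ∑ i, x i ^ 2 ≤ x ⬝ᵥ A *ᵥ x := by
  have hnonneg (y : Fin d → ℝ) : 0 ≤ y ⬝ᵥ A *ᵥ y := by
    simpa using hA.dotProduct_mulVec_nonneg y
  rcases (sum_nonneg fun i _ ↦ sq_nonneg (x i) : 0 ≤ ∑ i, x i ^ 2).eq_or_lt with hr | hr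
  · rw [← hr, mul_zero]
    exact hnonneg x
  set y := (√(∑ i, x i ^ 2))⁻¹ • x
  have hy : ∑ i, y i ^ 2 = 1 := by
    simp only [y, Pi.smul_apply, smul_eq_mul, mul_pow, ← mul_sum, inv_pow, sq_sqrt hr.le]
    exact inv_mul_cancel₀ hr.ne'
  have hcy : c ≤ y ⬝ᵥ A *ᵥ y :=
    hc.trans (csInf_le ⟨0, by rintro _ ⟨z, -, rfl⟩; exact hnonneg z⟩ ⟨y, hy, rfl⟩)
  rwa [smul_dotProduct_mulVec_smul, inv_pow, sq_sqrt hr.le, le_inv_mul_iff₀ hr,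
    mul_comm] at hcy

end Matrix

section DesignMatrix

variable {m : Type*}

noncomputable def designMatrix (X : ℕ → m → ℝ) (t : ℕ) : Matrix m m ℝ :=
  ∑ s ∈ Icc 1 t, vecMulVec (X s) (X s)

variable {X : ℕ → m → ℝ}

theorem designMatrix_succ (t : ℕ) :
    designMatrix X (t + 1) = designMatrix X t + vecMulVec (X (t + 1)) (X (t + 1)) :=
  sum_Icc_succ_top (by omega) _

theorem posSemidef_designMatrix [Fintype m] (t : ℕ) : (designMatrix X t).PosSemidef :=
  posSemidef_sum _ fun s _ ↦ posSemidef_vecMulVec_self (X s)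

theorem posDef_designMatrix_of_le [Fintype m] {a b : ℕ} (ha : (designMatrix X a).PosDef)
    (hab : a ≤ b) : (designMatrix X b).PosDef := by
  induction b, hab using Nat.le_induction with
  | base => exact ha
  | succ b _ ih =>
    rw [designMatrix_succ]
    exact ih.add_posSemidef (posSemidef_vecMulVec_self _)

theorem trace_designMatrix_le [Fintype m] (hX : ∀ s, X s ⬝ᵥ X s ≤ 1) (t : ℕ) :
    (designMatrix X t).trace ≤ t := by
  simp only [designMatrix, trace_sum, trace_vecMulVec]
  calc _ ≤ ∑ s ∈ Icc 1 t, (1 : ℝ) := sum_le_sum fun s _ ↦ hX s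
    _ = t := by simp

theorem log_det_designMatrix_le [Fintype m] [DecidableEq m] (hX : ∀ s, X s ⬝ᵥ X s ≤ 1)
    {t : ℕ} (ht : (designMatrix X t).PosDef) :
    log (designMatrix X t).det ≤ Fintype.card m * log (t / Fintype.card m) := by
  rw [← log_pow]
  refine log_le_log ht.det_pos ((posSemidef_designMatrix t).det_le_trace_div_card_pow.trans ?_)
  have := (posSemidef_designMatrix (X := X) t).trace_nonneg
  gcongr
  exact trace_designMatrix_le hX t

theorem sum_dotProduct_inv_designMatrix_mulVec_le_log_det_sub [Fintype m] [DecidableEq m]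
    {a b : ℕ} (ha : (designMatrix X a).PosDef) (hab : a ≤ b) :
    ∑ t ∈ Ioc a b, X t ⬝ᵥ (designMatrix X t)⁻¹ *ᵥ X t ≤
      log (designMatrix X b).det - log (designMatrix X a).det := by
  induction b, hab using Nat.le_induction with
  | base => simp
  | succ b hab ih =>
    have hdown : designMatrix X (b + 1) - vecMulVec (X (b + 1)) (X (b + 1)) = designMatrix X b := by
      rw [designMatrix_succ, add_sub_cancel_right]
    have hGb := posDef_designMatrix_of_le ha hab
    have hGb₁ := posDef_designMatrix_of_le ha (hab.trans b.le_succ)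
    have hstep := hGb₁.dotProduct_inv_mulVec_le_log_det_sub (x := X (b + 1))
      (by rw [hdown]; exact hGb.det_pos)
    rw [hdown] at hstep
    rw [sum_Ioc_succ_top hab]
    linarith

end DesignMatrix

theorem stmt6 {d : ℕ} (X : ℕ → (Fin d → ℝ))
    (hX : ∀ t : ℕ, Real.sqrt (∑ i, (X t i) ^ 2) ≤ 1)
    (G : ℕ → Matrix (Fin d) (Fin d) ℝ)
    (hGdef : ∀ t : ℕ, G t = ∑ s ∈ Finset.Icc 1 t, Matrix.vecMulVec (X s) (X s))
    (hmin : 1 ≤ lambdaMin (G d)) :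
    ∀ n : ℕ, d < n →
      ∑ t ∈ Finset.Icc (d + 1) n, Real.sqrt (X t ⬝ᵥ (G t)⁻¹.mulVec (X t)) ≤
        Real.sqrt (2 * n * d * Real.log ((d + n : ℝ) / d)) := by
  intro n hn
  obtain rfl : G = designMatrix X := funext hGdef
  -- over `Fin 0` the Rayleigh set is empty and `lambdaMin = sInf ∅ = 0`
  have hd : 0 < d := Nat.pos_of_ne_zero (by rintro rfl; norm_num [lambdaMin] at hmin)
  have hGd (x : Fin d → ℝ) : ∑ i, x i ^ 2 ≤ x ⬝ᵥ designMatrix X d *ᵥ x := by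
    simpa using posSemidef_designMatrix d |>.mul_sum_sq_le_of_le_lambdaMin hmin x
  have hGd_herm := (posSemidef_designMatrix (X := X) d).isHermitian
  have hGd_pos := posDef_of_sum_sq_le_dotProduct_mulVec hGd_herm hGd
  have hX' (s : ℕ) : X s ⬝ᵥ X s ≤ 1 := by simpa [dotProduct, sq] using hX s
  have hlog_d := log_nonneg (hGd_herm.one_le_det hGd)
  have hlog_n : log (designMatrix X n).det ≤ d * log ((d + n) / d) := by
    refine (log_det_designMatrix_le hX' (posDef_designMatrix_of_le hGd_pos hn.le)).trans ?_
    have hnd : (0 : ℝ) < n / d := div_pos (by exact_mod_cast hd.trans hn) (by exact_mod_cast hd)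
    simp only [Fintype.card_fin]
    gcongr
    linarith
  have hw (t : ℕ) (ht : t ∈ Ioc d n) : 0 ≤ X t ⬝ᵥ (designMatrix X t)⁻¹ *ᵥ X t :=
    (posDef_designMatrix_of_le hGd_pos (mem_Ioc.1 ht).1.le).dotProduct_inv_mulVec_nonneg _
  have hpotential := sum_dotProduct_inv_designMatrix_mulVec_le_log_det_sub hGd_pos hn.le
  have hcard : (#(Ioc d n) : ℝ) ≤ 2 * n := by
    rw [Nat.card_Ioc]
    exact_mod_cast (by omega : n - d ≤ 2 * n)
  rw [Icc_add_one_left_eq_Ioc]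
  refine (sum_sqrt_le_sqrt_card_mul_sum _ _ hw).trans (sqrt_le_sqrt ?_)
  calc _ ≤ (2 * n : ℝ) * (d * log ((d + n) / d)) :=
        mul_le_mul hcard (by linarith) (sum_nonneg hw) (by positivity)
    _ = _ := by ring
end

section
/- Let A ⊂ ℝ^d be a finite nonempty set, G a d×d positive definite real matrix, θ, θ̂ ∈ ℝ^d, and β ≥ 0 such that ‖θ̂ − θ‖_G ≤ sqrt(β). Let x* ∈ A maximize x ↦ ⟨x, θ⟩ over A, and let X ∈ A maximize the upper confidence index x ↦ ⟨x, θ̂⟩ + sqrt(β) · ‖x‖_{G⁻¹} over A. Then ⟨x* − X, θ⟩ ≤ 2 sqrt(β) · ‖X‖_{G⁻¹}. -/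
/-!
Optimism: since `‖θ̂ - θ‖_G ≤ √β`, Cauchy–Schwarz between the dual norms `‖·‖_{G⁻¹}` and `‖·‖_G`
gives `|⟨x, θ̂ - θ⟩| ≤ √β ‖x‖_{G⁻¹}` for every `x`. Hence the UCB index of `x*` overestimates
`⟨x*, θ⟩`, the index of `X` dominates that of `x*`, and the index of `X` exceeds `⟨X, θ⟩` by at
most `2 √β ‖X‖_{G⁻¹}`.
-/

open Matrix

theorem Matrix.PosSemidef.dotProduct_mulVec_sq_le {n : Type*} [Fintype n]
    {M : Matrix n n ℝ} (hM : M.PosSemidef) (x y : n → ℝ) :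
    (x ⬝ᵥ M *ᵥ y) ^ 2 ≤ (x ⬝ᵥ M *ᵥ x) * (y ⬝ᵥ M *ᵥ y) := by
  let := M.toSeminormedAddCommGroup hM
  let := M.toInnerProductSpace hM
  have h_inner (u v : n → ℝ) : inner ℝ u v = u ⬝ᵥ M *ᵥ v := by
    change (M *ᵥ v) ⬝ᵥ star u = _
    rw [dotProduct_comm]; rfl
  simpa only [h_inner, sq] using real_inner_mul_inner_self_le x y

theorem Matrix.PosDef.abs_dotProduct_le_sqrt_mul_sqrt {n : Type*} [Fintype n] [DecidableEq n]
    {G : Matrix n n ℝ} (hG : G.PosDef) (x y : n → ℝ) :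
    |x ⬝ᵥ y| ≤ √(x ⬝ᵥ G⁻¹ *ᵥ x) * √(y ⬝ᵥ G *ᵥ y) := by
  have hGinv_G : G⁻¹ * G = 1 := nonsing_inv_mul G (hG.isUnit.map detMonoidHom)
  have hx : x ⬝ᵥ G⁻¹ *ᵥ (G *ᵥ y) = x ⬝ᵥ y := by
    rw [mulVec_mulVec, hGinv_G, one_mulVec]
  have hy : (G *ᵥ y) ⬝ᵥ G⁻¹ *ᵥ (G *ᵥ y) = y ⬝ᵥ G *ᵥ y := by
    rw [mulVec_mulVec, hGinv_G, one_mulVec, dotProduct_comm]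
  have hCS := hG.inv.posSemidef.dotProduct_mulVec_sq_le x (G *ᵥ y)
  rw [hx, hy] at hCS
  have hx_nonneg : 0 ≤ x ⬝ᵥ G⁻¹ *ᵥ x := by
    simpa using hG.inv.posSemidef.dotProduct_mulVec_nonneg x
  rw [← Real.sqrt_sq_eq_abs, ← Real.sqrt_mul hx_nonneg]
  exact Real.sqrt_le_sqrt hCS

theorem stmt7_general {d : ℕ} (A : Finset (Fin d → ℝ))
    (G : Matrix (Fin d) (Fin d) ℝ) (hG : G.PosDef)
    (θ θhat : Fin d → ℝ) (β : ℝ)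
    (hconf : Real.sqrt ((θhat - θ) ⬝ᵥ G.mulVec (θhat - θ)) ≤ Real.sqrt β)
    (xstar X : Fin d → ℝ) (hxs : xstar ∈ A)
    (hucb : ∀ x ∈ A, x ⬝ᵥ θhat + Real.sqrt β * Real.sqrt (x ⬝ᵥ G⁻¹.mulVec x) ≤
      X ⬝ᵥ θhat + Real.sqrt β * Real.sqrt (X ⬝ᵥ G⁻¹.mulVec X)) :
    (xstar - X) ⬝ᵥ θ ≤ 2 * Real.sqrt β * Real.sqrt (X ⬝ᵥ G⁻¹.mulVec X) := by
  have hdev (x : Fin d → ℝ) : |x ⬝ᵥ θhat - x ⬝ᵥ θ| ≤ √β * √(x ⬝ᵥ G⁻¹ *ᵥ x) := by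
    rw [← dotProduct_sub, mul_comm]
    exact (hG.abs_dotProduct_le_sqrt_mul_sqrt x _).trans
      (mul_le_mul_of_nonneg_left hconf (Real.sqrt_nonneg _))
  have hxstar_le_index := (abs_le.mp (hdev xstar)).1
  have hX_index_le := (abs_le.mp (hdev X)).2
  rw [sub_dotProduct]
  linarith [hucb xstar hxs]

theorem stmt7 {d : ℕ} (A : Finset (Fin d → ℝ)) (hA : A.Nonempty)
    (G : Matrix (Fin d) (Fin d) ℝ) (hG : G.PosDef)
    (θ θhat : Fin d → ℝ) (β : ℝ) (hβ : 0 ≤ β)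
    (hconf : Real.sqrt ((θhat - θ) ⬝ᵥ G.mulVec (θhat - θ)) ≤ Real.sqrt β)
    (xstar X : Fin d → ℝ) (hxs : xstar ∈ A) (hX : X ∈ A)
    (hopt : ∀ x ∈ A, x ⬝ᵥ θ ≤ xstar ⬝ᵥ θ)
    (hucb : ∀ x ∈ A, x ⬝ᵥ θhat + Real.sqrt β * Real.sqrt (x ⬝ᵥ G⁻¹.mulVec x) ≤
      X ⬝ᵥ θhat + Real.sqrt β * Real.sqrt (X ⬝ᵥ G⁻¹.mulVec X)) :
    (xstar - X) ⬝ᵥ θ ≤ 2 * Real.sqrt β * Real.sqrt (X ⬝ᵥ G⁻¹.mulVec X) :=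
  stmt7_general A G hG θ θhat β hconf xstar X hxs hucb
end

section
/- Let A ⊂ ℝ^d be a finite nonempty set, θ, θ̂ ∈ ℝ^d, let x* ∈ A maximize x ↦ ⟨x, θ⟩ over A, let x̂ ∈ A maximize x ↦ ⟨x, θ̂⟩ over A, and set Δ̂_{x*} = ⟨x̂ − x*, θ̂⟩ (which is nonnegative). Then: (i) if |⟨x*, θ̂ − θ⟩| ≤ Δ̂_{x*}, then ⟨x* − x̂, θ⟩ ≤ ⟨x̂, θ̂ − θ⟩; and (ii) if in addition |⟨x̂, θ̂ − θ⟩| ≤ Δ_min/2, where Δ_min = min{⟨x* − x, θ⟩ : x ∈ A, ⟨x* − x, θ⟩ > 0} > 0 is the minimum positive suboptimality gap, then ⟨x̂, θ⟩ = ⟨x*, θ⟩, i.e. the greedy arm x̂ is optimal for θ. -/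
open Matrix

theorem stmt8 {d : ℕ} (A : Finset (Fin d → ℝ)) (θ θhat : Fin d → ℝ)
    (xstar xhat : Fin d → ℝ) (hxs : xstar ∈ A) (hxh : xhat ∈ A)
    (hopt : ∀ x ∈ A, x ⬝ᵥ θ ≤ xstar ⬝ᵥ θ)
    (hgreedy : ∀ x ∈ A, x ⬝ᵥ θhat ≤ xhat ⬝ᵥ θhat)
    (Δmin : ℝ) (hΔpos : 0 < Δmin)
    (hΔmin : ∀ x ∈ A, 0 < (xstar - x) ⬝ᵥ θ → Δmin ≤ (xstar - x) ⬝ᵥ θ)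
    (h1 : |xstar ⬝ᵥ (θhat - θ)| ≤ (xhat - xstar) ⬝ᵥ θhat) :
    ((xstar - xhat) ⬝ᵥ θ ≤ xhat ⬝ᵥ (θhat - θ)) ∧
      (|xhat ⬝ᵥ (θhat - θ)| ≤ Δmin / 2 → xhat ⬝ᵥ θ = xstar ⬝ᵥ θ) := by
  have h1' := abs_le.mp h1
  simp only [sub_dotProduct, dotProduct_sub] at *
  have key : xstar ⬝ᵥ θ - xhat ⬝ᵥ θ ≤ xhat ⬝ᵥ θhat - xhat ⬝ᵥ θ := by linarith [h1'.1, h1'.2]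
  refine ⟨key, fun h2 => ?_⟩
  have h2' := abs_le.mp h2
  have hge := hopt xhat hxh
  by_contra hne
  have hpos : 0 < xstar ⬝ᵥ θ - xhat ⬝ᵥ θ := lt_of_le_of_ne (by linarith) (by
    intro h; exact hne (by linarith))
  have := hΔmin xhat hxh hpos
  linarith [h2'.1, h2'.2]
end
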